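/- Let n ∈ ℕ and let M : ℝⁿ → ℝ^{n×n}, C : ℝⁿ × ℝⁿ → ℝ^{n×n}, G : ℝⁿ → ℝⁿ be functions, F_d an n×n matrix, and α a positive definite diagonal n×n matrix. Assume there exist positive constants m₂, ζ_{m1}, ζ_{c1}, ζ_{c2}, ζ_g such that for all ξ, ν, η ∈ ℝⁿ: ‖M(ξ)‖ ≤ m₂, ‖M(ξ) − M(ν)‖ ≤ ζ_{m1}‖ξ − ν‖, ‖C(ξ,ν)‖ ≤ ζ_{c1}‖ν‖, ‖C(ξ,ν) − C(η,ν)‖ ≤ ζ_{c2}‖ξ − η‖, C(ξ,ν)η = C(ξ,η)ν, and ‖G(ξ) − G(ν)‖ ≤ ζ_g‖ξ − ν‖ (matrix norms being operator norms). Let q_d, q̇_d, q̈_d ∈ ℝⁿ be bounded: ‖q_d‖ ≤ B₀, ‖q̇_d‖ ≤ B₁, ‖q̈_d‖ ≤ B₂. For e, r ∈ ℝⁿ set q = q_d − e, q̇ = q̇_d − (r − αe), ė = r − αe, and define χ = M(q)(q̈_d + αė) + C(q,q̇)(q̇_d + αe) + G(q) + F_d q̇ − [M(q_d)q̈_d +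 C(q_d,q̇_d)q̇_d + G(q_d) + F_d q̇_d]. Then there exist functions ρ₁, ρ₂ : [0,∞) → [0,∞), nonnegative and nondecreasing, depending only on the constants above, such that ‖χ‖ ≤ ρ₁(‖e‖)·‖e‖ + ρ₂(‖e‖)·‖r‖ for all e, r ∈ ℝⁿ. -/

import Mathlib

/-- The Euclidean norm of a vector in `ℝⁿ`. -/
noncomputable def eucNorm {n : ℕ} (v : Fin n → ℝ) : ℝ := Real.sqrt (∑ i, v i ^ 2)

/-!
Expanding `χ` around the desired trajectory, every term is either a difference of the model
evaluated at `q = q_d - e` and at `q_d`, hence `O(‖e‖)` by the Lipschitz properties, or carries a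
factor `ė = r - αe`, whose norm is at most `‖r‖ + ‖α‖‖e‖`. The switching property
`C(ξ,ν)η = C(ξ,η)ν` makes the velocity error enter the Coriolis term linearly; the one genuinely
quadratic term `C(q,q̇)αe`, with `‖q̇‖ ≤ B₁ + ‖ė‖`, is what makes the gains depend on `‖e‖`.
-/

open Matrix

lemma eucNorm_eq_norm {n : ℕ} (v : Fin n → ℝ) : eucNorm v = ‖WithLp.toLp 2 v‖ := by
  simp [eucNorm, EuclideanSpace.norm_eq]

lemma eucNorm_nonneg {n : ℕ} (v : Fin n → ℝ) : 0 ≤ eucNorm v := Real.sqrt_nonneg _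

lemma eucNorm_add_le {n : ℕ} (v w : Fin n → ℝ) : eucNorm (v + w) ≤ eucNorm v + eucNorm w := by
  simpa only [eucNorm_eq_norm, WithLp.toLp_add] using norm_add_le _ _

lemma eucNorm_neg {n : ℕ} (v : Fin n → ℝ) : eucNorm (-v) = eucNorm v := by
  simp only [eucNorm_eq_norm, WithLp.toLp_neg, norm_neg]

lemma eucNorm_sub_le {n : ℕ} (v w : Fin n → ℝ) : eucNorm (v - w) ≤ eucNorm v + eucNorm w := by
  simpa only [eucNorm_eq_norm, WithLp.toLp_sub] using norm_sub_le _ _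

lemma eucNorm_mulVec_le {n : ℕ} (B : Matrix (Fin n) (Fin n) ℝ) (v : Fin n → ℝ) :
    eucNorm (B *ᵥ v) ≤ ‖toEuclideanCLM (𝕜 := ℝ) B‖ * eucNorm v := by
  simpa only [eucNorm_eq_norm, toEuclideanCLM_toLp] using
    (toEuclideanCLM (𝕜 := ℝ) B).le_opNorm (WithLp.toLp 2 v)

section MismatchBounds

variable {n : ℕ} {M : (Fin n → ℝ) → Matrix (Fin n) (Fin n) ℝ}
  {C : (Fin n → ℝ) → (Fin n → ℝ) → Matrix (Fin n) (Fin n) ℝ} {G : (Fin n → ℝ) → Fin n → ℝ}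
  {m2 ζm1 ζc1 ζc2 ζg B1 B2 : ℝ} {qd qd' qdd : Fin n → ℝ}

lemma eucNorm_inertia_mismatch_le
    (hMb : ∀ ξ v : Fin n → ℝ, eucNorm (M ξ *ᵥ v) ≤ m2 * eucNorm v)
    (hML : ∀ ξ ν v : Fin n → ℝ,
      eucNorm ((M ξ - M ν) *ᵥ v) ≤ ζm1 * eucNorm (ξ - ν) * eucNorm v)
    (hζm1 : 0 ≤ ζm1) (hq2 : eucNorm qdd ≤ B2) (e w : Fin n → ℝ) :
    eucNorm (M (qd - e) *ᵥ (qdd + w) - M qd *ᵥ qdd) ≤ ζm1 * eucNorm e * B2 + m2 * eucNorm w := by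
  have hsplit : M (qd - e) *ᵥ (qdd + w) - M qd *ᵥ qdd
      = (M (qd - e) - M qd) *ᵥ qdd + M (qd - e) *ᵥ w := by
    rw [sub_mulVec, mulVec_add]; abel
  have hML' := hML (qd - e) qd qdd
  rw [sub_sub_cancel_left, eucNorm_neg] at hML'
  calc
    _ ≤ eucNorm ((M (qd - e) - M qd) *ᵥ qdd) + eucNorm (M (qd - e) *ᵥ w) :=
      hsplit ▸ eucNorm_add_le _ _
    _ ≤ ζm1 * eucNorm e * B2 + m2 * eucNorm w := by
      have := eucNorm_nonneg e
      gcongr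
      · exact hML'.trans (by gcongr)
      · exact hMb _ _

-- The switching property turns `C(q_d, q̇) q̇_d - C(q_d, q̇_d) q̇_d` into `-C(q_d, q̇_d) ė`.
lemma eucNorm_coriolis_mismatch_le
    (hCb : ∀ ξ ν v : Fin n → ℝ, eucNorm (C ξ ν *ᵥ v) ≤ ζc1 * eucNorm ν * eucNorm v)
    (hCL : ∀ ξ ν η v : Fin n → ℝ,
      eucNorm ((C ξ ν - C η ν) *ᵥ v) ≤ ζc2 * eucNorm (ξ - η) * eucNorm v)
    (hCswitch : ∀ ξ ν η : Fin n → ℝ, C ξ ν *ᵥ η = C ξ η *ᵥ ν)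
    (hζc1 : 0 ≤ ζc1) (hζc2 : 0 ≤ ζc2) (hq1 : eucNorm qd' ≤ B1) (e ed w : Fin n → ℝ) :
    eucNorm (C (qd - e) (qd' - ed) *ᵥ (qd' + w) - C qd qd' *ᵥ qd')
      ≤ ζc2 * eucNorm e * B1 + ζc1 * B1 * eucNorm ed
        + ζc1 * (B1 + eucNorm ed) * eucNorm w := by
  have hsplit : C (qd - e) (qd' - ed) *ᵥ (qd' + w) - C qd qd' *ᵥ qd'
      = (C (qd - e) (qd' - ed) - C qd (qd' - ed)) *ᵥ qd' + -(C qd qd' *ᵥ ed)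
        + C (qd - e) (qd' - ed) *ᵥ w := by
    rw [sub_mulVec, mulVec_add, hCswitch qd (qd' - ed) qd', mulVec_sub]; abel
  have hCL' := hCL (qd - e) (qd' - ed) qd qd'
  rw [sub_sub_cancel_left, eucNorm_neg] at hCL'
  have hqv : eucNorm (qd' - ed) ≤ B1 + eucNorm ed := (eucNorm_sub_le _ _).trans (by gcongr)
  calc
    _ ≤ eucNorm ((C (qd - e) (qd' - ed) - C qd (qd' - ed)) *ᵥ qd') + eucNorm (-(C qd qd' *ᵥ ed))
        + eucNorm (C (qd - e) (qd' - ed) *ᵥ w) :=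
      hsplit ▸ (eucNorm_add_le _ _).trans (by gcongr; exact eucNorm_add_le _ _)
    _ ≤ _ := by
      have := eucNorm_nonneg e; have := eucNorm_nonneg ed; have := eucNorm_nonneg w
      rw [eucNorm_neg]
      gcongr
      · exact hCL'.trans (by gcongr)
      · exact (hCb _ _ _).trans (by gcongr)
      · exact (hCb _ _ _).trans (by gcongr)

variable {A Fd : Matrix (Fin n) (Fin n) ℝ} {a f : ℝ}

lemma eucNorm_mismatch_le
    (hMb : ∀ ξ v : Fin n → ℝ, eucNorm (M ξ *ᵥ v) ≤ m2 * eucNorm v)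
    (hML : ∀ ξ ν v : Fin n → ℝ,
      eucNorm ((M ξ - M ν) *ᵥ v) ≤ ζm1 * eucNorm (ξ - ν) * eucNorm v)
    (hCb : ∀ ξ ν v : Fin n → ℝ, eucNorm (C ξ ν *ᵥ v) ≤ ζc1 * eucNorm ν * eucNorm v)
    (hCL : ∀ ξ ν η v : Fin n → ℝ,
      eucNorm ((C ξ ν - C η ν) *ᵥ v) ≤ ζc2 * eucNorm (ξ - η) * eucNorm v)
    (hCswitch : ∀ ξ ν η : Fin n → ℝ, C ξ ν *ᵥ η = C ξ η *ᵥ ν)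
    (hGL : ∀ ξ ν : Fin n → ℝ, eucNorm (G ξ - G ν) ≤ ζg * eucNorm (ξ - ν))
    (hA : ∀ v, eucNorm (A *ᵥ v) ≤ a * eucNorm v) (hF : ∀ v, eucNorm (Fd *ᵥ v) ≤ f * eucNorm v)
    (hm2 : 0 ≤ m2) (hζm1 : 0 ≤ ζm1) (hζc1 : 0 ≤ ζc1) (hζc2 : 0 ≤ ζc2)
    (hq1 : eucNorm qd' ≤ B1) (hq2 : eucNorm qdd ≤ B2) (e ed : Fin n → ℝ) :
    eucNorm (M (qd - e) *ᵥ (qdd + A *ᵥ ed) + C (qd - e) (qd' - ed) *ᵥ (qd' + A *ᵥ e)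
        + G (qd - e) + Fd *ᵥ (qd' - ed) - (M qd *ᵥ qdd + C qd qd' *ᵥ qd' + G qd + Fd *ᵥ qd'))
      ≤ (ζm1 * B2 + ζc2 * B1 + ζc1 * B1 * a + ζg) * eucNorm e
        + (m2 * a + ζc1 * B1 + f + ζc1 * a * eucNorm e) * eucNorm ed := by
  have hsplit : M (qd - e) *ᵥ (qdd + A *ᵥ ed) + C (qd - e) (qd' - ed) *ᵥ (qd' + A *ᵥ e)
        + G (qd - e) + Fd *ᵥ (qd' - ed) - (M qd *ᵥ qdd + C qd qd' *ᵥ qd' + G qd + Fd *ᵥ qd')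
      = (M (qd - e) *ᵥ (qdd + A *ᵥ ed) - M qd *ᵥ qdd)
        + (C (qd - e) (qd' - ed) *ᵥ (qd' + A *ᵥ e) - C qd qd' *ᵥ qd')
        + (G (qd - e) - G qd) + -(Fd *ᵥ ed) := by
    rw [mulVec_sub]; abel
  have hG := hGL (qd - e) qd
  rw [sub_sub_cancel_left, eucNorm_neg] at hG
  have := eucNorm_nonneg e; have := eucNorm_nonneg ed
  have := (eucNorm_nonneg qd').trans hq1
  calc
    _ ≤ eucNorm (M (qd - e) *ᵥ (qdd + A *ᵥ ed) - M qd *ᵥ qdd)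
        + eucNorm (C (qd - e) (qd' - ed) *ᵥ (qd' + A *ᵥ e) - C qd qd' *ᵥ qd')
        + eucNorm (G (qd - e) - G qd) + eucNorm (-(Fd *ᵥ ed)) := by
      rw [hsplit]
      refine (eucNorm_add_le _ _).trans (add_le_add ?_ le_rfl)
      refine (eucNorm_add_le _ _).trans (add_le_add ?_ le_rfl)
      exact eucNorm_add_le _ _
    _ ≤ (ζm1 * eucNorm e * B2 + m2 * (a * eucNorm ed))
        + (ζc2 * eucNorm e * B1 + ζc1 * B1 * eucNorm ed
          + ζc1 * (B1 + eucNorm ed) * (a * eucNorm e))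
        + ζg * eucNorm e + f * eucNorm ed := by
      rw [eucNorm_neg]
      gcongr
      · exact (eucNorm_inertia_mismatch_le hMb hML hζm1 hq2 e _).trans (by gcongr; exact hA ed)
      · exact (eucNorm_coriolis_mismatch_le hCb hCL hCswitch hζc1 hζc2 hq1 e ed _).trans
          (by gcongr; exact hA e)
      · exact hF ed
    _ = _ := by ring

end MismatchBounds

open Matrix in
theorem chi_bound_general (n : ℕ)
    (M : (Fin n → ℝ) → Matrix (Fin n) (Fin n) ℝ)
    (C : (Fin n → ℝ) → (Fin n → ℝ) → Matrix (Fin n) (Fin n) ℝ)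
    (G : (Fin n → ℝ) → Fin n → ℝ)
    (Fd : Matrix (Fin n) (Fin n) ℝ) (α : Fin n → ℝ)
    (m2 ζm1 ζc1 ζc2 ζg B1 B2 : ℝ)
    (hm2 : 0 < m2) (hζm1 : 0 < ζm1) (hζc1 : 0 < ζc1) (hζc2 : 0 < ζc2) (hζg : 0 < ζg)
    (hMb : ∀ ξ v : Fin n → ℝ, eucNorm (M ξ *ᵥ v) ≤ m2 * eucNorm v)
    (hML : ∀ ξ ν v : Fin n → ℝ,
      eucNorm ((M ξ - M ν) *ᵥ v) ≤ ζm1 * eucNorm (ξ - ν) * eucNorm v)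
    (hCb : ∀ ξ ν v : Fin n → ℝ, eucNorm (C ξ ν *ᵥ v) ≤ ζc1 * eucNorm ν * eucNorm v)
    (hCL : ∀ ξ ν η v : Fin n → ℝ,
      eucNorm ((C ξ ν - C η ν) *ᵥ v) ≤ ζc2 * eucNorm (ξ - η) * eucNorm v)
    (hCswitch : ∀ ξ ν η : Fin n → ℝ, C ξ ν *ᵥ η = C ξ η *ᵥ ν)
    (hGL : ∀ ξ ν : Fin n → ℝ, eucNorm (G ξ - G ν) ≤ ζg * eucNorm (ξ - ν))
    (qd qd' qdd : Fin n → ℝ)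
    (hq1 : eucNorm qd' ≤ B1) (hq2 : eucNorm qdd ≤ B2) :
    ∃ ρ1 ρ2 : ℝ → ℝ,
      (∀ s ∈ Set.Ici (0 : ℝ), 0 ≤ ρ1 s) ∧ (∀ s ∈ Set.Ici (0 : ℝ), 0 ≤ ρ2 s) ∧
      MonotoneOn ρ1 (Set.Ici 0) ∧ MonotoneOn ρ2 (Set.Ici 0) ∧
      ∀ e r : Fin n → ℝ,
        eucNorm (M (qd - e) *ᵥ (qdd + Matrix.diagonal α *ᵥ (r - Matrix.diagonal α *ᵥ e))
          + C (qd - e) (qd' - (r - Matrix.diagonal α *ᵥ e)) *ᵥ (qd' + Matrix.diagonal α *ᵥ e)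
          + G (qd - e) + Fd *ᵥ (qd' - (r - Matrix.diagonal α *ᵥ e))
          - (M qd *ᵥ qdd + C qd qd' *ᵥ qd' + G qd + Fd *ᵥ qd'))
        ≤ ρ1 (eucNorm e) * eucNorm e + ρ2 (eucNorm e) * eucNorm r := by
  set a := ‖toEuclideanCLM (𝕜 := ℝ) (diagonal α)‖
  set f := ‖toEuclideanCLM (𝕜 := ℝ) Fd‖
  have ha : 0 ≤ a := norm_nonneg _
  have hf : 0 ≤ f := norm_nonneg _
  have hB1 : 0 ≤ B1 := (eucNorm_nonneg qd').trans hq1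
  have hB2 : 0 ≤ B2 := (eucNorm_nonneg qdd).trans hq2
  -- `ρ₁ = c₀ + a ρ₂` absorbs the `‖e‖`-part of `‖ė‖ ≤ ‖r‖ + a ‖e‖`.
  refine ⟨fun s ↦ ζm1 * B2 + ζc2 * B1 + ζc1 * B1 * a + ζg
      + a * (m2 * a + ζc1 * B1 + f + ζc1 * a * s),
    fun s ↦ m2 * a + ζc1 * B1 + f + ζc1 * a * s, fun s (hs : 0 ≤ s) ↦ by positivity,
    fun s (hs : 0 ≤ s) ↦ by positivity, fun s _ t _ hst ↦ by dsimp only; gcongr,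
    fun s _ t _ hst ↦ by dsimp only; gcongr, fun e r ↦ ?_⟩
  have hedot : eucNorm (r - diagonal α *ᵥ e) ≤ eucNorm r + a * eucNorm e :=
    (eucNorm_sub_le _ _).trans (by gcongr; exact eucNorm_mulVec_le _ _)
  have := eucNorm_nonneg e
  calc
    _ ≤ _ := eucNorm_mismatch_le hMb hML hCb hCL hCswitch hGL (eucNorm_mulVec_le _)
        (eucNorm_mulVec_le Fd) hm2.le hζm1.le hζc1.le hζc2.le hq1 hq2 e _
    _ ≤ (ζm1 * B2 + ζc2 * B1 + ζc1 * B1 * a + ζg) * eucNorm e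
        + (m2 * a + ζc1 * B1 + f + ζc1 * a * eucNorm e) * (eucNorm r + a * eucNorm e) := by
      gcongr
    _ = _ := by ring

open Matrix in
/-- Bound on the mismatch vector `χ` (inequality (16) of the paper): under the standard
bounding/Lipschitz properties of the robot model (matrix bounds stated as Euclidean
operator-norm bounds) and boundedness of the desired trajectory, there exist nonnegative
nondecreasing functions `ρ₁, ρ₂` such that `‖χ‖ ≤ ρ₁(‖e‖)‖e‖ + ρ₂(‖e‖)‖r‖`. -/
theorem chi_bound (n : ℕ)
    (M : (Fin n → ℝ) → Matrix (Fin n) (Fin n) ℝ)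
    (C : (Fin n → ℝ) → (Fin n → ℝ) → Matrix (Fin n) (Fin n) ℝ)
    (G : (Fin n → ℝ) → Fin n → ℝ)
    (Fd : Matrix (Fin n) (Fin n) ℝ) (α : Fin n → ℝ) (hα : ∀ i, 0 < α i)
    (m2 ζm1 ζc1 ζc2 ζg B0 B1 B2 : ℝ)
    (hm2 : 0 < m2) (hζm1 : 0 < ζm1) (hζc1 : 0 < ζc1) (hζc2 : 0 < ζc2) (hζg : 0 < ζg)
    (hMb : ∀ ξ v : Fin n → ℝ, eucNorm (M ξ *ᵥ v) ≤ m2 * eucNorm v)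
    (hML : ∀ ξ ν v : Fin n → ℝ,
      eucNorm ((M ξ - M ν) *ᵥ v) ≤ ζm1 * eucNorm (ξ - ν) * eucNorm v)
    (hCb : ∀ ξ ν v : Fin n → ℝ, eucNorm (C ξ ν *ᵥ v) ≤ ζc1 * eucNorm ν * eucNorm v)
    (hCL : ∀ ξ ν η v : Fin n → ℝ,
      eucNorm ((C ξ ν - C η ν) *ᵥ v) ≤ ζc2 * eucNorm (ξ - η) * eucNorm v)
    (hCswitch : ∀ ξ ν η : Fin n → ℝ, C ξ ν *ᵥ η = C ξ η *ᵥ ν)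
    (hGL : ∀ ξ ν : Fin n → ℝ, eucNorm (G ξ - G ν) ≤ ζg * eucNorm (ξ - ν))
    (qd qd' qdd : Fin n → ℝ)
    (hq0 : eucNorm qd ≤ B0) (hq1 : eucNorm qd' ≤ B1) (hq2 : eucNorm qdd ≤ B2) :
    ∃ ρ1 ρ2 : ℝ → ℝ,
      (∀ s ∈ Set.Ici (0 : ℝ), 0 ≤ ρ1 s) ∧ (∀ s ∈ Set.Ici (0 : ℝ), 0 ≤ ρ2 s) ∧
      MonotoneOn ρ1 (Set.Ici 0) ∧ MonotoneOn ρ2 (Set.Ici 0) ∧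
      ∀ e r : Fin n → ℝ,
        eucNorm (M (qd - e) *ᵥ (qdd + Matrix.diagonal α *ᵥ (r - Matrix.diagonal α *ᵥ e))
          + C (qd - e) (qd' - (r - Matrix.diagonal α *ᵥ e)) *ᵥ (qd' + Matrix.diagonal α *ᵥ e)
          + G (qd - e) + Fd *ᵥ (qd' - (r - Matrix.diagonal α *ᵥ e))
          - (M qd *ᵥ qdd + C qd qd' *ᵥ qd' + G qd + Fd *ᵥ qd'))
        ≤ ρ1 (eucNorm e) * eucNorm e + ρ2 (eucNorm e) * eucNorm r :=
  chi_bound_general n M C G Fd α m2 ζm1 ζc1 ζc2 ζg B1 B2 hm2 hζm1 hζc1 hζc2 hζg hMb hML hCb hCL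
    hCswitch hGL qd qd' qdd hq1 hq2
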